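/- arXiv:math/0408389 — 4 statements merged into one kernel-verified Lean document; each statement's English description precedes it below -/
import Mathlib

section
/- (Perturbation lemma, special deformation retract case) Let (Y,∂) and (X,d) be chain complexes, i : Y → X and p : X → Y chain maps with p ∘ i = id, and h : X_* → X_{*+1} a homotopy with d∘h + h∘d = i∘p − id, satisfying the side conditions h∘i = 0, p∘h = 0, h∘h = 0. Let δ : X_* → X_{*−1} be a perturbation, i.e. (d+δ)² = 0, such that id − δ∘h is invertible, and set A = (id − δ∘h)^{−1} ∘ δ. Then with ∂¹ = ∂ + p∘A∘i, i¹ = i + h∘A∘i, p¹ = p + p∘A∘h, h¹ = h + h∘A∘h, the data (Y,∂¹), (X,d+δ), i¹, p¹, h¹ again form a special deformation retract; in particular ∂¹ is a differential, i¹ and p¹ are chain maps, p¹∘i¹ = id, (d+δ)∘h¹ + h¹∘(d+δ) = i¹∘p¹ − id, h¹∘i¹ = 0, p¹∘h¹ = 0, and h¹∘h¹ = 0. -/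
/-- **perturbation lemma, special deformation retract case.**
Given a special deformation retract `(Y,∂) ⇄ (X,d)` with maps `i`, `p`, homotopy `h`
satisfying the side conditions, and a small perturbation `δ` of `d` (with
`(id − δ∘h)` invertible, inverse `inv`), setting `A = (id − δ∘h)⁻¹ ∘ δ` and
`∂¹ = ∂ + p∘A∘i`, `i¹ = i + h∘A∘i`, `p¹ = p + p∘A∘h`, `h¹ = h + h∘A∘h`,
the perturbed data again form a special deformation retract. -/
theorem perturbation_lemma (k : Type*) [CommRing k]
    (X Y : ℤ → Type*) [∀ n, AddCommGroup (X n)] [∀ n, Module k (X n)]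
    [∀ n, AddCommGroup (Y n)] [∀ n, Module k (Y n)]
    (dX : ∀ n : ℤ, X (n + 1) →ₗ[k] X n) (dY : ∀ n : ℤ, Y (n + 1) →ₗ[k] Y n)
    (i : ∀ n : ℤ, Y n →ₗ[k] X n) (p : ∀ n : ℤ, X n →ₗ[k] Y n)
    (h : ∀ n : ℤ, X n →ₗ[k] X (n + 1))
    (hdX : ∀ n, dX n ∘ₗ dX (n + 1) = 0) (hdY : ∀ n, dY n ∘ₗ dY (n + 1) = 0)
    (hi : ∀ n, i n ∘ₗ dY n = dX n ∘ₗ i (n + 1))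
    (hp : ∀ n, p n ∘ₗ dX n = dY n ∘ₗ p (n + 1))
    (hpi : ∀ n, p n ∘ₗ i n = LinearMap.id)
    (hh : ∀ n, dX (n + 1) ∘ₗ h (n + 1) + h n ∘ₗ dX n
      = i (n + 1) ∘ₗ p (n + 1) - LinearMap.id)
    (hhi : ∀ n, h n ∘ₗ i n = 0) (hph : ∀ n, p (n + 1) ∘ₗ h n = 0)
    (hhh : ∀ n, h (n + 1) ∘ₗ h n = 0)
    (δ : ∀ n : ℤ, X (n + 1) →ₗ[k] X n)
    (hδ : ∀ n, (dX n + δ n) ∘ₗ (dX (n + 1) + δ (n + 1)) = 0)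
    (inv : ∀ n : ℤ, X n →ₗ[k] X n)
    (hinv1 : ∀ n, inv n ∘ₗ (LinearMap.id - δ n ∘ₗ h n) = LinearMap.id)
    (hinv2 : ∀ n, (LinearMap.id - δ n ∘ₗ h n) ∘ₗ inv n = LinearMap.id) :
    let A : ∀ n : ℤ, X (n + 1) →ₗ[k] X n := fun n => inv n ∘ₗ δ n
    let d1 : ∀ n : ℤ, Y (n + 1) →ₗ[k] Y n := fun n => dY n + p n ∘ₗ A n ∘ₗ i (n + 1)
    let i1 : ∀ n : ℤ, Y (n + 1) →ₗ[k] X (n + 1) :=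
      fun n => i (n + 1) + h n ∘ₗ A n ∘ₗ i (n + 1)
    let p1 : ∀ n : ℤ, X n →ₗ[k] Y n := fun n => p n + p n ∘ₗ A n ∘ₗ h n
    let h1 : ∀ n : ℤ, X n →ₗ[k] X (n + 1) := fun n => h n + h n ∘ₗ A n ∘ₗ h n
    (∀ n, d1 n ∘ₗ d1 (n + 1) = 0) ∧
    (∀ n, i1 n ∘ₗ d1 (n + 1) = (dX (n + 1) + δ (n + 1)) ∘ₗ i1 (n + 1)) ∧
    (∀ n, p1 n ∘ₗ (dX n + δ n) = d1 n ∘ₗ p1 (n + 1)) ∧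
    (∀ n, p1 (n + 1) ∘ₗ i1 n = LinearMap.id) ∧
    (∀ n, (dX (n + 1) + δ (n + 1)) ∘ₗ h1 (n + 1) + h1 n ∘ₗ (dX n + δ n)
      = i1 n ∘ₗ p1 (n + 1) - LinearMap.id) ∧
    (∀ n, h1 (n + 1) ∘ₗ i1 n = 0) ∧
    (∀ n, p1 (n + 1) ∘ₗ h1 n = 0) ∧
    (∀ n, h1 (n + 1) ∘ₗ h1 n = 0) := by
  intro A d1 i1 p1 h1
  have hA : ∀ n, A n = inv n ∘ₗ δ n := fun n => rfl
  have hd1 : ∀ n, d1 n = dY n + p n ∘ₗ (A n ∘ₗ i (n + 1)) := fun n => rfl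
  have hi1 : ∀ n, i1 n = i (n + 1) + h n ∘ₗ (A n ∘ₗ i (n + 1)) := fun n => rfl
  have hp1 : ∀ n, p1 n = p n + p n ∘ₗ (A n ∘ₗ h n) := fun n => rfl
  have hh1 : ∀ n, h1 n = h n + h n ∘ₗ (A n ∘ₗ h n) := fun n => rfl
  clear_value A d1 i1 p1 h1
  -- ## basic consequences of the hypotheses
  -- A ∘ h = inv - id
  have eAh : ∀ n, A n ∘ₗ h n = inv n - LinearMap.id := by
    intro n
    have e := hinv1 n
    simp only [LinearMap.comp_sub, LinearMap.comp_id] at e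
    rw [hA n, LinearMap.comp_assoc, eq_sub_iff_add_eq, ← e]; abel
  -- δ ∘ (h ∘ inv) = inv - id
  have eδh : ∀ n, δ n ∘ₗ (h n ∘ₗ inv n) = inv n - LinearMap.id := by
    intro n
    have e := hinv2 n
    simp only [LinearMap.sub_comp, LinearMap.id_comp] at e
    rw [← LinearMap.comp_assoc, eq_sub_iff_add_eq, ← e]; abel
  -- A ∘ (h ∘ δ) = A - δ
  have eAhδ : ∀ n, A n ∘ₗ (h n ∘ₗ δ n) = A n - δ n := by
    intro n
    have e := congrArg (fun f => f ∘ₗ δ n) (eAh n)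
    simp only [LinearMap.sub_comp, LinearMap.id_comp, LinearMap.comp_assoc] at e
    rw [e, hA]
  -- δ ∘ (h ∘ A) = A - δ
  have eδhA : ∀ n, δ n ∘ₗ (h n ∘ₗ A n) = A n - δ n := by
    intro n
    have e := congrArg (fun f => f ∘ₗ δ n) (eδh n)
    simp only [LinearMap.sub_comp, LinearMap.id_comp, LinearMap.comp_assoc] at e
    rw [hA]; exact e
  -- perturbation: δ ∘ d = -(d ∘ δ) - δ ∘ δ
  have epert : ∀ n, δ n ∘ₗ dX (n + 1) = -(dX n ∘ₗ δ (n + 1)) - δ n ∘ₗ δ (n + 1) := by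
    intro n
    have e := hδ n
    simp only [LinearMap.add_comp, LinearMap.comp_add, hdX, zero_add] at e
    rw [eq_sub_iff_add_eq, eq_neg_iff_add_eq_zero, ← e]; abel
  -- A ∘ d = -(inv ∘ (d ∘ δ)) - A ∘ δ
  have eAd : ∀ n, A n ∘ₗ dX (n + 1)
      = -(inv n ∘ₗ (dX n ∘ₗ δ (n + 1))) - A n ∘ₗ δ (n + 1) := by
    intro n
    have e := congrArg (fun f => inv n ∘ₗ f) (epert n)
    simp only [LinearMap.comp_sub, LinearMap.comp_neg, LinearMap.comp_assoc] at e
    rw [hA n]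
    simp only [LinearMap.comp_assoc]
    exact e
  -- i ∘ p = d ∘ h + h ∘ d + id
  have ehip : ∀ n, i (n + 1) ∘ₗ p (n + 1)
      = dX (n + 1) ∘ₗ h (n + 1) + h n ∘ₗ dX n + LinearMap.id := by
    intro n
    rw [hh n]; abel
  -- ## the key identity: d∘A + A∘d + A∘i∘p∘A = 0
  have eKEY : ∀ n, dX n ∘ₗ A (n + 1) + A n ∘ₗ dX (n + 1)
      + A n ∘ₗ (i (n + 1) ∘ₗ (p (n + 1) ∘ₗ A (n + 1))) = 0 := by
    intro n
    have ck0 : A n ∘ₗ (i (n + 1) ∘ₗ (p (n + 1) ∘ₗ A (n + 1)))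
        = A n ∘ₗ (dX (n + 1) ∘ₗ (h (n + 1) ∘ₗ A (n + 1)))
          + A n ∘ₗ (h n ∘ₗ (dX n ∘ₗ A (n + 1))) + A n ∘ₗ A (n + 1) := by
      have e := congrArg (fun f => A n ∘ₗ (f ∘ₗ A (n + 1))) (ehip n)
      simp only [LinearMap.comp_add, LinearMap.add_comp, LinearMap.id_comp,
        LinearMap.comp_id, LinearMap.comp_assoc] at e
      exact e
    have ck1 : A n ∘ₗ (h n ∘ₗ (dX n ∘ₗ A (n + 1)))
        = inv n ∘ₗ (dX n ∘ₗ A (n + 1)) - dX n ∘ₗ A (n + 1) := by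
      have e := congrArg (fun f => f ∘ₗ (dX n ∘ₗ A (n + 1))) (eAh n)
      simp only [LinearMap.sub_comp, LinearMap.id_comp, LinearMap.comp_assoc] at e
      exact e
    have ck2 : A n ∘ₗ (dX (n + 1) ∘ₗ (h (n + 1) ∘ₗ A (n + 1)))
        = -(inv n ∘ₗ (dX n ∘ₗ A (n + 1))) + inv n ∘ₗ (dX n ∘ₗ δ (n + 1))
          - A n ∘ₗ A (n + 1) + A n ∘ₗ δ (n + 1) := by
      have e := congrArg (fun f => f ∘ₗ (h (n + 1) ∘ₗ A (n + 1))) (eAd n)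
      simp only [LinearMap.sub_comp, LinearMap.neg_comp, LinearMap.comp_assoc] at e
      rw [eδhA (n + 1)] at e
      simp only [LinearMap.comp_sub] at e
      rw [e]; abel
    rw [ck0, ck1, ck2, eAd n]
    abel
  -- ## auxiliary vanishing lemmas
  have z1 : ∀ n, h (n + 1) ∘ₗ (h n ∘ₗ (A n ∘ₗ h n)) = 0 := by
    intro n
    have e := congrArg (fun f => f ∘ₗ (A n ∘ₗ h n)) (hhh n)
    simp only [LinearMap.zero_comp, LinearMap.comp_assoc] at e
    exact e
  have z2 : ∀ n, p (n + 1) ∘ₗ (h n ∘ₗ (A n ∘ₗ h n)) = 0 := by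
    intro n
    have e := congrArg (fun f => f ∘ₗ (A n ∘ₗ h n)) (hph n)
    simp only [LinearMap.zero_comp, LinearMap.comp_assoc] at e
    exact e
  have z3 : ∀ n, h (n + 1) ∘ₗ (h n ∘ₗ (A n ∘ₗ i (n + 1))) = 0 := by
    intro n
    have e := congrArg (fun f => f ∘ₗ (A n ∘ₗ i (n + 1))) (hhh n)
    simp only [LinearMap.zero_comp, LinearMap.comp_assoc] at e
    exact e
  have z4 : ∀ n, p (n + 1) ∘ₗ (h n ∘ₗ (A n ∘ₗ i (n + 1))) = 0 := by
    intro n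
    have e := congrArg (fun f => f ∘ₗ (A n ∘ₗ i (n + 1))) (hph n)
    simp only [LinearMap.zero_comp, LinearMap.comp_assoc] at e
    exact e
  refine ⟨?_, ?_, ?_, ?_, ?_, ?_, ?_, ?_⟩
  · -- (1) d1 ∘ d1 = 0
    intro n
    have c1 := congrArg (fun f => p n ∘ₗ (f ∘ₗ i (n + 1 + 1))) (eKEY n)
    simp only [LinearMap.add_comp, LinearMap.comp_add, LinearMap.comp_zero,
      LinearMap.zero_comp, LinearMap.comp_assoc] at c1
    have e2 := congrArg (fun f => f ∘ₗ (A (n + 1) ∘ₗ i (n + 1 + 1))) (hp n)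
    simp only [LinearMap.comp_assoc] at e2
    rw [hd1 n, hd1 (n + 1)]
    simp only [LinearMap.add_comp, LinearMap.comp_add, LinearMap.comp_assoc]
    rw [hdY n]
    simp only [zero_add, add_zero]
    rw [← e2, hi (n + 1), ← c1]
    abel
  · -- (2) i1 ∘ d1 = (dX + δ) ∘ i1
    intro n
    have c2 := congrArg (fun f => h n ∘ₗ (f ∘ₗ i (n + 1 + 1))) (eKEY n)
    simp only [LinearMap.add_comp, LinearMap.comp_add, LinearMap.comp_zero,
      LinearMap.zero_comp, LinearMap.comp_assoc] at c2
    have id1 := congrArg (fun f => f ∘ₗ i (n + 1 + 1)) (eδhA (n + 1))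
    simp only [LinearMap.sub_comp, LinearMap.comp_assoc] at id1
    have id2 := congrArg (fun f => f ∘ₗ (A (n + 1) ∘ₗ i (n + 1 + 1))) (ehip n)
    simp only [LinearMap.add_comp, LinearMap.id_comp, LinearMap.comp_assoc] at id2
    rw [hi1 n, hi1 (n + 1), hd1 (n + 1)]
    simp only [LinearMap.add_comp, LinearMap.comp_add, LinearMap.comp_assoc]
    rw [id2] at c2
    simp only [LinearMap.comp_add, LinearMap.comp_assoc] at c2
    rw [hi (n + 1), id1, id2]
    simp only [LinearMap.comp_add, LinearMap.comp_assoc]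
    rw [← sub_eq_zero, ← c2]
    abel
  · -- (3) p1 ∘ (dX + δ) = d1 ∘ p1
    intro n
    have c3 := congrArg (fun f => p n ∘ₗ (f ∘ₗ h (n + 1))) (eKEY n)
    simp only [LinearMap.add_comp, LinearMap.comp_add, LinearMap.comp_zero,
      LinearMap.zero_comp, LinearMap.comp_assoc] at c3
    have e2 := congrArg (fun f => f ∘ₗ (A (n + 1) ∘ₗ h (n + 1))) (hp n)
    simp only [LinearMap.comp_assoc] at e2
    rw [hp1 n, hp1 (n + 1), hd1 n]
    simp only [LinearMap.add_comp, LinearMap.comp_add, LinearMap.comp_assoc]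
    rw [← hp n, ← e2, eAhδ n, ehip n]
    simp only [LinearMap.comp_add, LinearMap.comp_sub, LinearMap.comp_id,
      LinearMap.comp_assoc]
    rw [eq_comm, ← sub_eq_zero, ← c3]
    abel
  · -- (4) p1 ∘ i1 = id
    intro n
    rw [hp1 (n + 1), hi1 n]
    simp only [LinearMap.add_comp, LinearMap.comp_add, LinearMap.comp_assoc]
    rw [hpi (n + 1)]
    simp only [z4, z3, hhi (n + 1), LinearMap.comp_zero, LinearMap.zero_comp,
      add_zero, zero_add]
  · -- (5) (dX+δ) ∘ h1 + h1 ∘ (dX+δ) = i1 ∘ p1 - id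
    intro n
    have c4 := congrArg (fun f => h n ∘ₗ (f ∘ₗ h (n + 1))) (eKEY n)
    simp only [LinearMap.add_comp, LinearMap.comp_add, LinearMap.comp_zero,
      LinearMap.zero_comp, LinearMap.comp_assoc] at c4
    have id1 := congrArg (fun f => f ∘ₗ h (n + 1)) (eδhA (n + 1))
    simp only [LinearMap.sub_comp, LinearMap.comp_assoc] at id1
    have id2 := congrArg (fun f => f ∘ₗ (A (n + 1) ∘ₗ h (n + 1))) (ehip n)
    simp only [LinearMap.add_comp, LinearMap.id_comp, LinearMap.comp_assoc] at id2
    rw [hh1 (n + 1), hh1 n, hi1 n, hp1 (n + 1)]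
    simp only [LinearMap.add_comp, LinearMap.comp_add, LinearMap.comp_assoc]
    rw [id2] at c4
    simp only [LinearMap.comp_add, LinearMap.comp_assoc] at c4
    rw [id1, eAhδ n, ehip n, id2]
    simp only [LinearMap.comp_add, LinearMap.comp_sub, LinearMap.comp_id,
      LinearMap.comp_assoc]
    rw [eq_comm, ← sub_eq_zero, ← c4]
    abel
  · -- (6) h1 ∘ i1 = 0
    intro n
    rw [hh1 (n + 1), hi1 n]
    simp only [LinearMap.add_comp, LinearMap.comp_add, LinearMap.comp_assoc]
    simp only [z3, hhi (n + 1), LinearMap.comp_zero, LinearMap.zero_comp,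
      add_zero, zero_add]
  · -- (7) p1 ∘ h1 = 0
    intro n
    rw [hp1 (n + 1), hh1 n]
    simp only [LinearMap.add_comp, LinearMap.comp_add, LinearMap.comp_assoc]
    simp only [z1, z2, hph n, hhh n, LinearMap.comp_zero, LinearMap.zero_comp,
      add_zero, zero_add]
  · -- (8) h1 ∘ h1 = 0
    intro n
    rw [hh1 (n + 1), hh1 n]
    simp only [LinearMap.add_comp, LinearMap.comp_add, LinearMap.comp_assoc]
    simp only [z1, hhh n, LinearMap.comp_zero, LinearMap.zero_comp,
      add_zero, zero_add]
end

section
/- Let V be a k-module (k ⊇ ℚ) with an endomorphism κ of finite order w+1 (κ^{w+1} = id). Then V = ker(id − κ) ⊕ im(id − κ), the projection P onto ker(id − κ) along im(id − κ) is given by P = (1/(w+1)) ∑_{i=0}^{w} κ^i, and the Green operator G (zero on ker(id − κ), inverse of id − κ on im(id − κ)) is given by G = (1/(w+1)) ∑_{i=0}^{w} (w/2 − i) κ^i. -/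
lemma sum_range_id_rat (n : ℕ) : ∑ i ∈ Finset.range n, (i : ℚ) = n * (n - 1) / 2 := by
  induction n with
  | zero => simp
  | succ n ih =>
    rw [Finset.sum_range_succ, ih]
    push_cast
    ring


/-- Let `V` be a module over a commutative ring `k` containing `ℚ`,
and let `κ` be an endomorphism of `V` with `κ^(w+1) = id`.  Then
`V = ker (id − κ) ⊕ im (id − κ)`, the projection `P` onto `ker (id − κ)` along
`im (id − κ)` is `P = (1/(w+1)) ∑_{i=0}^{w} κ^i`, and the Green operator `G`
(zero on `ker (id − κ)`, inverse of `id − κ` on `im (id − κ)`) is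
`G = (1/(w+1)) ∑_{i=0}^{w} (w/2 − i) κ^i`. -/
theorem projection_and_green_operator (k V : Type*) [CommRing k] [Algebra ℚ k]
    [AddCommGroup V] [Module k V] (w : ℕ) (κ : Module.End k V)
    (hκ : κ ^ (w + 1) = 1) :
    let P : Module.End k V :=
      algebraMap ℚ k (((w : ℚ) + 1)⁻¹) • ∑ i ∈ Finset.range (w + 1), κ ^ i
    let G : Module.End k V := algebraMap ℚ k (((w : ℚ) + 1)⁻¹) •
      ∑ i ∈ Finset.range (w + 1), algebraMap ℚ k ((w : ℚ) / 2 - (i : ℚ)) • κ ^ i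
    IsCompl (LinearMap.ker (1 - κ)) (LinearMap.range (1 - κ)) ∧
    (∀ x ∈ LinearMap.ker (1 - κ), P x = x) ∧
    (∀ x ∈ LinearMap.range (1 - κ), P x = 0) ∧
    (∀ x ∈ LinearMap.ker (1 - κ), G x = 0) ∧
    G * (1 - κ) = 1 - P ∧ (1 - κ) * G = 1 - P := by
  intro P G
  set c : k := algebraMap ℚ k (((w : ℚ) + 1)⁻¹) with hc
  set S : Module.End k V := ∑ i ∈ Finset.range (w + 1), κ ^ i with hSdef
  set T : Module.End k V :=
    ∑ i ∈ Finset.range (w + 1), algebraMap ℚ k ((w : ℚ) / 2 - (i : ℚ)) • κ ^ i with hTdef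
  have hPdef : P = c • S := rfl
  have hGdef : G = c • T := rfl
  clear_value P G
  have hNQ : ((w : ℚ) + 1) ≠ 0 := by positivity
  -- shifted power sum
  have hshift : ∑ i ∈ Finset.range (w + 1), κ ^ (i + 1) = S := by
    have h := (Finset.sum_range_succ' (fun i => κ ^ i) (w + 1)).symm.trans
        (Finset.sum_range_succ (fun i => κ ^ i) (w + 1))
    simp only [pow_zero, hκ] at h
    rw [hSdef]
    exact add_right_cancel h
  have hSr : S * κ = S := by
    rw [hSdef, Finset.sum_mul]
    simp only [← pow_succ]
    rw [← hSdef]; exact hshift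
  have hSl : κ * S = S := by
    rw [hSdef, Finset.mul_sum]
    simp only [← pow_succ']
    rw [← hSdef]; exact hshift
  have hSmulr : S * (1 - κ) = 0 := by rw [mul_sub, mul_one, hSr, sub_self]
  have hSmull : (1 - κ) * S = 0 := by rw [sub_mul, one_mul, hSl, sub_self]
  -- telescoping sum
  have key : ∀ n : ℕ,
      (∑ i ∈ Finset.range n, algebraMap ℚ k (i : ℚ) • κ ^ i) * (1 - κ)
        = (∑ i ∈ Finset.range n, κ ^ i) - 1
            + (1 - algebraMap ℚ k (n : ℚ)) • κ ^ n := by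
    intro n
    induction n with
    | zero => simp
    | succ n ih =>
      rw [Finset.sum_range_succ, add_mul, ih, Finset.sum_range_succ, smul_mul_assoc,
          mul_sub, mul_one, ← pow_succ]
      have hcast : algebraMap ℚ k ((n + 1 : ℕ) : ℚ) = algebraMap ℚ k (n : ℚ) + 1 := by
        push_cast; ring
      rw [hcast]
      module
  -- split T
  have hTsplit : T = algebraMap ℚ k ((w : ℚ) / 2) • S
      - ∑ i ∈ Finset.range (w + 1), algebraMap ℚ k (i : ℚ) • κ ^ i := by
    rw [hTdef, hSdef, Finset.smul_sum, ← Finset.sum_sub_distrib]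
    refine Finset.sum_congr rfl fun i _ => ?_
    rw [map_sub, sub_smul]
  have hTmul : T * (1 - κ) = algebraMap ℚ k ((w : ℚ) + 1) • 1 - S := by
    rw [hTsplit, sub_mul, smul_mul_assoc, hSmulr, smul_zero, key (w + 1), hκ, zero_sub,
        ← hSdef]
    have hcast : algebraMap ℚ k ((w + 1 : ℕ) : ℚ) = algebraMap ℚ k ((w : ℚ) + 1) := by
      push_cast; rfl
    rw [hcast]
    module
  have hcN : c * algebraMap ℚ k ((w : ℚ) + 1) = 1 := by
    rw [hc, ← map_mul, inv_mul_cancel₀ hNQ, map_one]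
  have hGmul : G * (1 - κ) = 1 - P := by
    rw [hGdef, hPdef, smul_mul_assoc, hTmul, smul_sub, smul_smul, hcN, one_smul]
  -- commutation
  have hcT : Commute (1 - κ) T := by
    rw [hTdef]
    refine Commute.sum_right _ _ _ fun i _ => ?_
    exact (((Commute.one_left κ).sub_left (Commute.refl κ)).pow_right i).smul_right _
  have hQG : (1 - κ) * G = 1 - P := by
    rw [hGdef, mul_smul_comm, hcT.eq, ← smul_mul_assoc, ← hGdef, hGmul]
  -- fixed points
  have hfix : ∀ x ∈ LinearMap.ker (1 - κ), κ x = x := by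
    intro x hx
    have h := LinearMap.mem_ker.mp hx
    rw [LinearMap.sub_apply, Module.End.one_apply, sub_eq_zero] at h
    exact h.symm
  have hfixpow : ∀ x ∈ LinearMap.ker (1 - κ), ∀ i : ℕ, (κ ^ i) x = x := by
    intro x hx i
    induction i with
    | zero => simp
    | succ i ih => rw [pow_succ', Module.End.mul_apply, ih, hfix x hx]
  have hPfix : ∀ x ∈ LinearMap.ker (1 - κ), P x = x := by
    intro x hx
    rw [hPdef, LinearMap.smul_apply, hSdef, LinearMap.sum_apply]
    rw [Finset.sum_congr rfl fun i _ => hfixpow x hx i, Finset.sum_const,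
        Finset.card_range, ← Nat.cast_smul_eq_nsmul k, smul_smul]
    have h1 : ((w + 1 : ℕ) : k) = algebraMap ℚ k ((w : ℚ) + 1) := by
      push_cast; ring
    rw [h1, hcN, one_smul]
  have hPmul : P * (1 - κ) = 0 := by
    rw [hPdef, smul_mul_assoc, hSmulr, smul_zero]
  have hPrange : ∀ x ∈ LinearMap.range (1 - κ), P x = 0 := by
    rintro x ⟨y, rfl⟩
    rw [← Module.End.mul_apply, hPmul, LinearMap.zero_apply]
  -- G vanishes on the kernel
  have gauss : ∑ i ∈ Finset.range (w + 1), ((w : ℚ) / 2 - (i : ℚ)) = 0 := by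
    rw [Finset.sum_sub_distrib, Finset.sum_const, Finset.card_range, sum_range_id_rat]
    push_cast
    ring
  have hGker : ∀ x ∈ LinearMap.ker (1 - κ), G x = 0 := by
    intro x hx
    rw [hGdef, LinearMap.smul_apply, hTdef, LinearMap.sum_apply]
    have : ∀ i ∈ Finset.range (w + 1),
        (algebraMap ℚ k ((w : ℚ) / 2 - (i : ℚ)) • κ ^ i) x
          = algebraMap ℚ k ((w : ℚ) / 2 - (i : ℚ)) • x := by
      intro i _
      rw [LinearMap.smul_apply, hfixpow x hx i]
    rw [Finset.sum_congr rfl this, ← Finset.sum_smul, ← map_sum, gauss, map_zero,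
        zero_smul, smul_zero]
  -- complementarity
  have hPker : ∀ x : V, P x ∈ LinearMap.ker (1 - κ) := by
    intro x
    rw [LinearMap.mem_ker, ← Module.End.mul_apply]
    have : (1 - κ) * P = 0 := by rw [hPdef, mul_smul_comm, hSmull, smul_zero]
    rw [this, LinearMap.zero_apply]
  have hsubrange : ∀ x : V, x - P x ∈ LinearMap.range (1 - κ) := by
    intro x
    have : x - P x = (1 - κ) (G x) := by
      rw [← Module.End.mul_apply, hQG, LinearMap.sub_apply, Module.End.one_apply]
    rw [this]
    exact LinearMap.mem_range_self _ _
  refine ⟨⟨?_, ?_⟩, hPfix, hPrange, hGker, hGmul, hQG⟩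
  · rw [Submodule.disjoint_def]
    intro x hx hx'
    rw [← hPfix x hx, hPrange x hx']
  · rw [codisjoint_iff_le_sup]
    intro x _
    exact Submodule.mem_sup.mpr ⟨P x, hPker x, x - P x, hsubrange x, by abel⟩
end

section
/- Let (Ẍ, d̈, b̈, B̈) be a double mixed complex with de Rham coboundary d̈_R and Karoubi operator κ̈ = id − (d̈ d̈_R + d̈_R d̈) as above, and suppose Ẍ admits the harmonic decomposition Ẍ = P(Ẍ) ⊕ P^⊥(Ẍ), with P the projection onto the generalized nullspace of id − κ̈. Then on P^⊥(Ẍ): (a) P^⊥(Ẍ) = d̈(P^⊥(Ẍ)) ⊕ d̈_R(P^⊥(Ẍ)); (b) d̈_R maps d̈(P^⊥(Ẍ)) isomorphically onto d̈_R(P^⊥(Ẍ)) with inverse G ∘ d̈, where G is the Green operator; and (c) d̈ maps d̈_R(P^⊥(Ẍ)) isomorphically onto d̈(P^⊥(Ẍ)) with inverse G ∘ d̈_R. In particular (P^⊥(Ẍ), d̈) and (P^⊥(Ẍ), d̈_R) are acyclic. -/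
/-- Let `(Ẍ, d̈, b̈, B̈)` be a double mixed complex with de Rham
coboundary `d̈_R` and Karoubi operator `κ̈ = id − (d̈ d̈_R + d̈_R d̈)`, admitting the
harmonic decomposition `Ẍ = P(Ẍ) ⊕ P^⊥(Ẍ)` with harmonic projection `P` (projection
onto `ker (κ̈ − id)²` along `im (κ̈ − id)²`, commuting with everything) and Green
operator `G`.  Then on `P^⊥(Ẍ)`:
(a) `P^⊥(Ẍ) = d̈(P^⊥(Ẍ)) ⊕ d̈_R(P^⊥(Ẍ))`;
(b) `d̈_R` maps `d̈(P^⊥(Ẍ))` isomorphically onto `d̈_R(P^⊥(Ẍ))` with inverse `G ∘ d̈`;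
(c) `d̈` maps `d̈_R(P^⊥(Ẍ))` isomorphically onto `d̈(P^⊥(Ẍ))` with inverse `G ∘ d̈_R`.
In particular `(P^⊥(Ẍ), d̈)` and `(P^⊥(Ẍ), d̈_R)` are acyclic. -/
theorem perp_decomposition (k : Type*) [Field k] [CharZero k]
    (X : ℕ → ℕ → Type*) [∀ v w, AddCommGroup (X v w)] [∀ v w, Module k (X v w)]
    (b : ∀ v w, X (v + 1) w →ₗ[k] X v w)
    (d : ∀ v w, X v w →ₗ[k] X v (w + 1))
    (dR : ∀ v w, X v (w + 1) →ₗ[k] X v w)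
    (hd : ∀ v w, d v (w + 1) ∘ₗ d v w = 0)
    (hdR : ∀ v w, dR v w ∘ₗ dR v (w + 1) = 0)
    (hbd : ∀ v w, d v w ∘ₗ b v w + b v (w + 1) ∘ₗ d (v + 1) w = 0)
    (hbdR : ∀ v w, b v w ∘ₗ dR (v + 1) w + dR v w ∘ₗ b v (w + 1) = 0)
    (P G : ∀ v w, X v w →ₗ[k] X v w) :
    let κ : ∀ v w, Module.End k (X v (w + 1)) := fun v w =>
      LinearMap.id - (d v w ∘ₗ dR v w + dR v (w + 1) ∘ₗ d v (w + 1))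
    -- `P` is the harmonic projection …
    (∀ v w, P v w ∘ₗ P v w = P v w) →
    (∀ v w, P v (w + 1) ∘ₗ κ v w = κ v w ∘ₗ P v (w + 1)) →
    (∀ v w, ((κ v w - 1) * (κ v w - 1)) ∘ₗ P v (w + 1) = 0) →
    (∀ v w, LinearMap.range (LinearMap.id - P v (w + 1)) =
      LinearMap.range ((κ v w - 1) * (κ v w - 1))) →
    -- … commuting with `d`, `dR` and `b`
    (∀ v w, d v w ∘ₗ P v w = P v (w + 1) ∘ₗ d v w) →
    (∀ v w, dR v w ∘ₗ P v (w + 1) = P v w ∘ₗ dR v w) →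
    (∀ v w, b v w ∘ₗ P (v + 1) w = P v w ∘ₗ b v w) →
    -- `G` is the Green operator: zero on `P(Ẍ)`, inverse of `id − κ̈` on `P^⊥(Ẍ)` …
    (∀ v w, G v w ∘ₗ P v w = 0) → (∀ v w, P v w ∘ₗ G v w = 0) →
    (∀ v w, G v (w + 1) ∘ₗ (1 - κ v w) = LinearMap.id - P v (w + 1)) →
    (∀ v w, (1 - κ v w) ∘ₗ G v (w + 1) = LinearMap.id - P v (w + 1)) →
    -- … commuting with `d` and `dR`
    (∀ v w, d v w ∘ₗ G v w = G v (w + 1) ∘ₗ d v w) →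
    (∀ v w, dR v w ∘ₗ G v (w + 1) = G v w ∘ₗ dR v w) →
    -- (a)
    (∀ v w, LinearMap.range (LinearMap.id - P v (w + 1)) =
        LinearMap.range (d v w ∘ₗ (LinearMap.id - P v w)) ⊔
          LinearMap.range (dR v (w + 1) ∘ₗ (LinearMap.id - P v (w + 2))) ∧
      Disjoint (LinearMap.range (d v w ∘ₗ (LinearMap.id - P v w)))
        (LinearMap.range (dR v (w + 1) ∘ₗ (LinearMap.id - P v (w + 2))))) ∧
    -- (b)
    (∀ v w, Set.BijOn (dR v w)
        (LinearMap.range (d v w ∘ₗ (LinearMap.id - P v w)) : Set (X v (w + 1)))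
        (LinearMap.range (dR v w ∘ₗ (LinearMap.id - P v (w + 1))) : Set (X v w)) ∧
      (∀ x ∈ LinearMap.range (d v w ∘ₗ (LinearMap.id - P v w)),
        G v (w + 1) (d v w (dR v w x)) = x) ∧
      (∀ y ∈ LinearMap.range (dR v w ∘ₗ (LinearMap.id - P v (w + 1))),
        dR v w (G v (w + 1) (d v w y)) = y)) ∧
    -- (c)
    (∀ v w, Set.BijOn (d v w)
        (LinearMap.range (dR v w ∘ₗ (LinearMap.id - P v (w + 1))) : Set (X v w))
        (LinearMap.range (d v w ∘ₗ (LinearMap.id - P v w)) : Set (X v (w + 1))) ∧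
      (∀ y ∈ LinearMap.range (dR v w ∘ₗ (LinearMap.id - P v (w + 1))),
        G v w (dR v w (d v w y)) = y) ∧
      (∀ x ∈ LinearMap.range (d v w ∘ₗ (LinearMap.id - P v w)),
        d v w (G v w (dR v w x)) = x)) ∧
    -- `(P^⊥(Ẍ), d̈)` is acyclic
    (∀ v w (x : X v (w + 1)), P v (w + 1) x = 0 → d v (w + 1) x = 0 →
      ∃ y : X v w, P v w y = 0 ∧ d v w y = x) ∧
    -- `(P^⊥(Ẍ), d̈_R)` is acyclic
    (∀ v w (x : X v (w + 1)), P v (w + 1) x = 0 → dR v w x = 0 →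
      ∃ y : X v (w + 2), P v (w + 2) y = 0 ∧ dR v (w + 1) y = x) := by
  intro κ hPP hPκ hκP hPrange hdP hdRP hbP hGP hPG hGκ hκG hdG hdRG
  -- pointwise versions of the hypotheses
  have hd' : ∀ v w (x : X v w), d v (w + 1) (d v w x) = 0 := fun v w x =>
    LinearMap.congr_fun (hd v w) x
  have hdR' : ∀ v w (x : X v (w + 2)), dR v w (dR v (w + 1) x) = 0 := fun v w x =>
    LinearMap.congr_fun (hdR v w) x
  have hPP' : ∀ v w (x : X v w), P v w (P v w x) = P v w x := fun v w x =>
    LinearMap.congr_fun (hPP v w) x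
  have hdP' : ∀ v w (x : X v w), d v w (P v w x) = P v (w + 1) (d v w x) := fun v w x =>
    LinearMap.congr_fun (hdP v w) x
  have hdRP' : ∀ v w (x : X v (w + 1)), dR v w (P v (w + 1) x) = P v w (dR v w x) :=
    fun v w x => LinearMap.congr_fun (hdRP v w) x
  have hdG' : ∀ v w (x : X v w), d v w (G v w x) = G v (w + 1) (d v w x) := fun v w x =>
    LinearMap.congr_fun (hdG v w) x
  have hdRG' : ∀ v w (x : X v (w + 1)), dR v w (G v (w + 1) x) = G v w (dR v w x) :=
    fun v w x => LinearMap.congr_fun (hdRG v w) x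
  have hPG' : ∀ v w (x : X v w), P v w (G v w x) = 0 := fun v w x => by
    have := LinearMap.congr_fun (hPG v w) x
    simpa using this
  -- the key identity coming from `G ∘ (1 - κ) = id - P`
  have hκ1 : ∀ v w, (1 : Module.End k (X v (w + 1))) - κ v w =
      d v w ∘ₗ dR v w + dR v (w + 1) ∘ₗ d v (w + 1) := by
    intro v w
    show (1 : Module.End k (X v (w + 1))) - (LinearMap.id - _) = _
    have : (1 : Module.End k (X v (w + 1))) = LinearMap.id := rfl
    rw [this, sub_sub_cancel]
  have hK : ∀ v w (x : X v (w + 1)),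
      G v (w + 1) (d v w (dR v w x)) + G v (w + 1) (dR v (w + 1) (d v (w + 1) x)) =
        x - P v (w + 1) x := by
    intro v w x
    have h := LinearMap.congr_fun ((hκ1 v w) ▸ hGκ v w) x
    simpa [LinearMap.add_apply, LinearMap.comp_apply, LinearMap.sub_apply,
      map_add] using h
  -- membership characterizations
  have hmemP : ∀ v w (x : X v w),
      x ∈ LinearMap.range (LinearMap.id - P v w) ↔ P v w x = 0 := by
    intro v w x
    constructor
    · rintro ⟨u, rfl⟩
      simp [LinearMap.sub_apply, map_sub, hPP']
    · intro hx
      exact ⟨x, by simp [LinearMap.sub_apply, hx]⟩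
  have hmemd : ∀ v w (x : X v (w + 1)),
      x ∈ LinearMap.range (d v w ∘ₗ (LinearMap.id - P v w)) ↔
        P v (w + 1) x = 0 ∧ d v (w + 1) x = 0 := by
    intro v w x
    constructor
    · rintro ⟨u, rfl⟩
      have hPa : P v w ((LinearMap.id - P v w : X v w →ₗ[k] X v w) u) = 0 := by
        simp [LinearMap.sub_apply, map_sub, hPP']
      constructor
      · simp only [LinearMap.comp_apply]
        rw [← hdP', hPa, map_zero]
      · simp only [LinearMap.comp_apply]
        exact hd' v w _
    · rintro ⟨hx, hdx⟩
      refine ⟨G v w (dR v w x), ?_⟩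
      have h1 : P v w (G v w (dR v w x)) = 0 := hPG' v w _
      have h2 := hK v w x
      rw [hx, hdx, map_zero, map_zero, sub_zero, add_zero] at h2
      simp only [LinearMap.comp_apply, LinearMap.sub_apply, LinearMap.id_apply, h1,
        sub_zero]
      rw [hdG']
      exact h2
  have hmemdR : ∀ v w (x : X v w),
      x ∈ LinearMap.range (dR v w ∘ₗ (LinearMap.id - P v (w + 1))) ↔
        ∃ c, P v (w + 1) c = 0 ∧ dR v w c = x := by
    intro v w x
    constructor
    · rintro ⟨u, rfl⟩
      exact ⟨(LinearMap.id - P v (w + 1) : X v (w + 1) →ₗ[k] X v (w + 1)) u,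
        by simp [LinearMap.sub_apply, map_sub, hPP'], rfl⟩
    · rintro ⟨c, hc, rfl⟩
      exact ⟨c, by simp [LinearMap.comp_apply, LinearMap.sub_apply, hc]⟩
  -- `P` vanishes on elements of `range (dR ∘ (1 - P))`
  have hPdR : ∀ v w (x : X v w),
      x ∈ LinearMap.range (dR v w ∘ₗ (LinearMap.id - P v (w + 1))) → P v w x = 0 := by
    intro v w x hx
    obtain ⟨c, hc, rfl⟩ := (hmemdR v w x).mp hx
    rw [← hdRP', hc, map_zero]
  -- part (b) inverse identities
  have hbinvL : ∀ v w (x : X v (w + 1)),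
      x ∈ LinearMap.range (d v w ∘ₗ (LinearMap.id - P v w)) →
        G v (w + 1) (d v w (dR v w x)) = x := by
    intro v w x hx
    obtain ⟨hPx, hdx⟩ := (hmemd v w x).mp hx
    have h := hK v w x
    rwa [hPx, hdx, map_zero, map_zero, sub_zero, add_zero] at h
  have hbinvR : ∀ v w (y : X v w),
      y ∈ LinearMap.range (dR v w ∘ₗ (LinearMap.id - P v (w + 1))) →
        dR v w (G v (w + 1) (d v w y)) = y := by
    intro v w y hy
    obtain ⟨c, hc, rfl⟩ := (hmemdR v w y).mp hy
    have h := hK v w c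
    rw [hc, sub_zero] at h
    have h2 : G v (w + 1) (d v w (dR v w c)) =
        c - G v (w + 1) (dR v (w + 1) (d v (w + 1) c)) := by
      rw [eq_sub_iff_add_eq]; exact h
    rw [h2, map_sub, hdRG', hdR', map_zero, sub_zero]
  -- acyclicity for `d`
  have hacycd : ∀ v w (x : X v (w + 1)), P v (w + 1) x = 0 → d v (w + 1) x = 0 →
      ∃ y : X v w, P v w y = 0 ∧ d v w y = x := by
    intro v w x hPx hdx
    refine ⟨G v w (dR v w x), hPG' v w _, ?_⟩
    have h := hK v w x
    rw [hPx, hdx, map_zero, map_zero, sub_zero, add_zero] at h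
    rw [hdG']; exact h
  -- acyclicity for `dR`
  have hacycdR : ∀ v w (x : X v (w + 1)), P v (w + 1) x = 0 → dR v w x = 0 →
      ∃ y : X v (w + 2), P v (w + 2) y = 0 ∧ dR v (w + 1) y = x := by
    intro v w x hPx hdRx
    refine ⟨G v (w + 2) (d v (w + 1) x), hPG' v (w + 2) _, ?_⟩
    have h := hK v w x
    rw [hPx, hdRx, map_zero, map_zero, sub_zero, zero_add] at h
    rw [hdRG']; exact h
  refine ⟨?_, ?_, ?_, hacycd, hacycdR⟩
  · -- part (a)
    intro v w
    constructor
    · apply le_antisymm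
      · intro x hx
        have hPx : P v (w + 1) x = 0 := (hmemP v (w + 1) x).mp hx
        have h := hK v w x
        rw [hPx, sub_zero] at h
        have h1 : d v w (G v w (dR v w x)) ∈
            LinearMap.range (d v w ∘ₗ (LinearMap.id - P v w)) := by
          rw [hmemd]
          constructor
          · rw [← hdP', hPG' v w, map_zero]
          · exact hd' v w _
        have h2 : dR v (w + 1) (G v (w + 2) (d v (w + 1) x)) ∈
            LinearMap.range (dR v (w + 1) ∘ₗ (LinearMap.id - P v (w + 2))) := by
          rw [hmemdR]
          exact ⟨G v (w + 2) (d v (w + 1) x), hPG' v (w + 2) _, rfl⟩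
        have hx2 : x = d v w (G v w (dR v w x)) +
            dR v (w + 1) (G v (w + 2) (d v (w + 1) x)) := by
          rw [hdG', hdRG']; exact h.symm
        rw [hx2]
        exact Submodule.add_mem_sup h1 h2
      · apply sup_le
        · intro x hx
          rw [hmemP]
          exact ((hmemd v w x).mp hx).1
        · intro x hx
          rw [hmemP]
          exact hPdR v (w + 1) x hx
    · rw [Submodule.disjoint_def]
      intro x hx1 hx2
      obtain ⟨hPx, hdx⟩ := (hmemd v w x).mp hx1
      obtain ⟨c, hc, rfl⟩ := (hmemdR v (w + 1) x).mp hx2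
      have hdRx : dR v w (dR v (w + 1) c) = 0 := hdR' v w c
      have h := hK v w (dR v (w + 1) c)
      rw [hPx, hdx, hdRx, map_zero, map_zero, map_zero, map_zero, add_zero,
        sub_zero] at h
      exact h.symm
  · -- part (b)
    intro v w
    refine ⟨⟨?_, ?_, ?_⟩, hbinvL v w, hbinvR v w⟩
    · -- MapsTo
      intro x hx
      have hPx : P v (w + 1) x = 0 := ((hmemd v w x).mp hx).1
      exact (hmemdR v w (dR v w x)).mpr ⟨x, hPx, rfl⟩
    · -- InjOn
      intro x₁ hx₁ x₂ hx₂ hEq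
      rw [← hbinvL v w x₁ hx₁, ← hbinvL v w x₂ hx₂, hEq]
    · -- SurjOn
      intro y hy
      refine ⟨G v (w + 1) (d v w y), ?_, hbinvR v w y hy⟩
      show G v (w + 1) (d v w y) ∈ LinearMap.range (d v w ∘ₗ (LinearMap.id - P v w))
      rw [hmemd]
      refine ⟨hPG' v (w + 1) _, ?_⟩
      rw [← hdG', hd']
  · -- part (c)
    intro v w
    have hcinvL : ∀ y ∈ LinearMap.range (dR v w ∘ₗ (LinearMap.id - P v (w + 1))),
        G v w (dR v w (d v w y)) = y := by
      intro y hy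
      rw [← hdRG']
      exact hbinvR v w y hy
    have hcinvR : ∀ x ∈ LinearMap.range (d v w ∘ₗ (LinearMap.id - P v w)),
        d v w (G v w (dR v w x)) = x := by
      intro x hx
      rw [hdG']
      exact hbinvL v w x hx
    refine ⟨⟨?_, ?_, ?_⟩, hcinvL, hcinvR⟩
    · -- MapsTo
      intro y hy
      have hPy : P v w y = 0 := hPdR v w y hy
      show d v w y ∈ LinearMap.range (d v w ∘ₗ (LinearMap.id - P v w))
      rw [hmemd]
      refine ⟨?_, hd' v w y⟩
      rw [← hdP', hPy, map_zero]
    · -- InjOn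
      intro y₁ hy₁ y₂ hy₂ hEq
      rw [← hcinvL y₁ hy₁, ← hcinvL y₂ hy₂, hEq]
    · -- SurjOn
      intro x hx
      refine ⟨G v w (dR v w x), ?_, hcinvR x hx⟩
      show G v w (dR v w x) ∈ LinearMap.range (dR v w ∘ₗ (LinearMap.id - P v (w + 1)))
      rw [hmemdR]
      exact ⟨G v (w + 1) x, hPG' v (w + 1) x, hdRG' v w x⟩
end

section
/- In the harmonic decomposition setting, for all x ∈ Ẍ_v^w one has P ∘ d̈_R(x) = (1/(w+1)) ∑_{i=0}^{w} κ̈^i ∘ d̈_R(x) = (1/(w+1)) B̈(x). Consequently B̈ vanishes on P^⊥(Ẍ), and B̈(x) = (w+1) d̈_R(P(x)) for all x ∈ Ẍ_v^w. -/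
private lemma fix_of_sq {k M : Type*} [Field k] [CharZero k] [AddCommGroup M]
    [Module k M] (t : Module.End k M) (n : ℕ) (ht : t ^ (n + 1) = 1) (x : M)
    (hx : ((t - 1) * (t - 1)) x = 0) : t x = x := by
  set v := (t - 1) x with hvdef
  have hv : t v = v := by
    have h : (t - 1) v = 0 := hx
    have h' : t v - v = 0 := by simpa [LinearMap.sub_apply] using h
    exact sub_eq_zero.mp h'
  have htx : t x = x + v := by
    have h : t x - x = v := by simp [hvdef, LinearMap.sub_apply]
    rw [← h]; abel
  have hpow : ∀ j : ℕ, (t ^ j) x = x + j • v := by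
    intro j
    induction j with
    | zero => simp
    | succ j ih =>
      rw [pow_succ', Module.End.mul_apply, ih, map_add, map_nsmul, hv, htx,
        succ_nsmul]
      abel
  have h1 : x = x + (n + 1) • v := by rw [← hpow, ht]; simp
  have h2 : (n + 1 : ℕ) • v = 0 := by
    have := h1.symm
    rwa [add_eq_left] at this
  have h3 : ((n + 1 : ℕ) : k) • v = 0 := by
    rwa [Nat.cast_smul_eq_nsmul]
  have h4 : v = 0 := by
    rcases smul_eq_zero.mp h3 with h | h
    · exact absurd h (Nat.cast_ne_zero.mpr (Nat.succ_ne_zero n))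
    · exact h
  rw [htx, h4, add_zero]

private lemma fixed_of_pow_fix {k M : Type*} [Field k] [AddCommGroup M]
    [Module k M] (t : Module.End k M) (n : ℕ) (x : M) (hx : t x = x) :
    (∑ i ∈ Finset.range (n + 1), t ^ i) x = (n + 1 : ℕ) • x := by
  have hp : ∀ i : ℕ, (t ^ i) x = x := by
    intro i
    induction i with
    | zero => simp
    | succ i ih => rw [pow_succ, Module.End.mul_apply, hx, ih]
  rw [LinearMap.sum_apply]
  simp [hp]

/-- In the harmonic decomposition setting for the double mixed
complex `(Ẍ, d̈, b̈, B̈)` with `Ẍ^w = X^w ⊕ X^{w+1}`, `B̈(x,y) = (0, N x)`,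
`d̈_R(x,y) = (0,x)`, Karoubi operator `κ̈` and harmonic projection `P`:
for all `x ∈ Ẍ^w` one has
`P(d̈_R x) = (1/(w+1)) ∑_{i=0}^{w} κ̈^i (d̈_R x) = (1/(w+1)) B̈(x)`.
Consequently `B̈` vanishes on `P^⊥(Ẍ)` and `B̈(x) = (w+1) d̈_R (P x)`.
Here `X0, X1, X2, X3, X4` play the roles of `X^{w−2}, …, X^{w+2}`, the element `x`
lives in `Ẍ^w = X2 × X3`, `κ1`, `κ2` are the Karoubi operators of levels `w−1`, `w`
and `P1`, `P2` the corresponding harmonic projections. -/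
theorem harmonic_projection_dR
    (k : Type*) [Field k] [CharZero k] (w : ℕ)
    (X0 X1 X2 X3 X4 : Type*)
    [AddCommGroup X0] [Module k X0] [AddCommGroup X1] [Module k X1]
    [AddCommGroup X2] [Module k X2] [AddCommGroup X3] [Module k X3]
    [AddCommGroup X4] [Module k X4]
    (t1 : Module.End k X1) (t2 : Module.End k X2) (t3 : Module.End k X3)
    (ht1 : t1 ^ w = 1) (ht2 : t2 ^ (w + 1) = 1) (ht3 : t3 ^ (w + 2) = 1)
    (d0 : X0 →ₗ[k] X1) (d1 d1' : X1 →ₗ[k] X2)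
    (d2 d2' : X2 →ₗ[k] X3) (d3 d3' : X3 →ₗ[k] X4) :
    let D01 : X0 × X1 →ₗ[k] X1 × X2 :=
      LinearMap.prod (d0 ∘ₗ LinearMap.fst k X0 X1
          + (LinearMap.id - t1) ∘ₗ LinearMap.snd k X0 X1)
        (d1' ∘ₗ LinearMap.snd k X0 X1)
    let D12 : X1 × X2 →ₗ[k] X2 × X3 :=
      LinearMap.prod (d1 ∘ₗ LinearMap.fst k X1 X2
          + (LinearMap.id - t2) ∘ₗ LinearMap.snd k X1 X2)
        (d2' ∘ₗ LinearMap.snd k X1 X2)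
    let D23 : X2 × X3 →ₗ[k] X3 × X4 :=
      LinearMap.prod (d2 ∘ₗ LinearMap.fst k X2 X3
          + (LinearMap.id - t3) ∘ₗ LinearMap.snd k X2 X3)
        (d3' ∘ₗ LinearMap.snd k X2 X3)
    let R10 : X1 × X2 →ₗ[k] X0 × X1 := LinearMap.prod 0 (LinearMap.fst k X1 X2)
    let R21 : X2 × X3 →ₗ[k] X1 × X2 := LinearMap.prod 0 (LinearMap.fst k X2 X3)
    let R32 : X3 × X4 →ₗ[k] X2 × X3 := LinearMap.prod 0 (LinearMap.fst k X3 X4)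
    let κ1 : Module.End k (X1 × X2) := LinearMap.id - (D01 ∘ₗ R10 + R21 ∘ₗ D12)
    let κ2 : Module.End k (X2 × X3) := LinearMap.id - (D12 ∘ₗ R21 + R32 ∘ₗ D23)
    -- the Connes-type operator `B̈(x,y) = (0, N x)` with `N = ∑_{i=0}^{w} t^i`
    let B : X2 × X3 →ₗ[k] X1 × X2 :=
      LinearMap.prod 0 ((∑ i ∈ Finset.range (w + 1), t2 ^ i) ∘ₗ
        LinearMap.fst k X2 X3)
    -- the harmonic projections `P1`, `P2` onto `ker (κ̈ − id)²` along `im (κ̈ − id)²`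
    ∀ P1 : Module.End k (X1 × X2), ∀ P2 : Module.End k (X2 × X3),
      P1 * P1 = P1 → P2 * P2 = P2 →
      Commute P1 κ1 → Commute P2 κ2 →
      (κ1 - 1) * (κ1 - 1) * P1 = 0 → (κ2 - 1) * (κ2 - 1) * P2 = 0 →
      LinearMap.range (1 - P1) = LinearMap.range ((κ1 - 1) * (κ1 - 1)) →
      LinearMap.range (1 - P2) = LinearMap.range ((κ2 - 1) * (κ2 - 1)) →
      P1 ∘ₗ R21 = R21 ∘ₗ P2 →
      (∀ p : X2 × X3,
          P1 (R21 p) = ((w : k) + 1)⁻¹ • ∑ i ∈ Finset.range (w + 1), (κ1 ^ i) (R21 p)) ∧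
      (∀ p : X2 × X3, ∑ i ∈ Finset.range (w + 1), (κ1 ^ i) (R21 p) = B p) ∧
      (∀ p : X2 × X3, B (p - P2 p) = 0) ∧
      (∀ p : X2 × X3, B p = ((w : k) + 1) • R21 (P2 p)) := by
  intro D01 D12 D23 R10 R21 R32 κ1 κ2 B P1 P2 hP1 hP2 hc1 hc2 hk1 hk2 hr1 hr2 hPR
  set N : Module.End k X2 := ∑ i ∈ Finset.range (w + 1), t2 ^ i with hN
  -- κ1 on elements of the form (0, y)
  have hκ1 : ∀ y : X2, κ1 (0, y) = (0, t2 y) := by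
    intro y
    simp [κ1, D01, D12, R10, R21, LinearMap.sub_apply, Prod.ext_iff]
  have hκ1pow : ∀ (i : ℕ) (y : X2), (κ1 ^ i) ((0 : X1), y) = (0, (t2 ^ i) y) := by
    intro i
    induction i with
    | zero => intro y; simp
    | succ i ih =>
      intro y
      rw [pow_succ', Module.End.mul_apply, ih, hκ1, pow_succ', Module.End.mul_apply]
  -- first component of κ2
  have hκ2fst : ∀ q : X2 × X3, (κ2 q).1 = t2 q.1 := by
    intro q
    simp [κ2, D12, D23, R21, R32, LinearMap.sub_apply]
  have hκ2sq : ∀ q : X2 × X3,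
      (((κ2 - 1) * (κ2 - 1)) q).1 = ((t2 - 1) * (t2 - 1)) q.1 := by
    intro q
    simp [Module.End.mul_apply, LinearMap.sub_apply, hκ2fst, map_sub]
  -- the first component of P2 p is t2-fixed
  have hfix : ∀ p : X2 × X3, t2 (P2 p).1 = (P2 p).1 := by
    intro p
    apply fix_of_sq t2 w ht2
    have h0 : ((κ2 - 1) * (κ2 - 1)) (P2 p) = 0 := by
      have := congrFun (congrArg DFunLike.coe hk2) p
      simpa [Module.End.mul_apply] using this
    rw [← hκ2sq, h0]
    rfl
  have hNP2 : ∀ p : X2 × X3, N (P2 p).1 = ((w + 1 : ℕ) : k) • (P2 p).1 := by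
    intro p
    rw [hN, fixed_of_pow_fix t2 w _ (hfix p), Nat.cast_smul_eq_nsmul]
  -- N kills (t2 - 1)² (and a fortiori the perp part)
  have hNt : N * ((t2 - 1) * (t2 - 1)) = 0 := by
    rw [← mul_assoc, hN, geom_sum_mul, ht2, sub_self, zero_mul]
  have hNperp : ∀ p : X2 × X3, N (p - P2 p).1 = 0 := by
    intro p
    have hmem : p - P2 p ∈ LinearMap.range (1 - P2) :=
      ⟨p, by simp [LinearMap.sub_apply]⟩
    rw [hr2] at hmem
    obtain ⟨s, hs⟩ := hmem
    have h1 : (p - P2 p).1 = ((t2 - 1) * (t2 - 1)) s.1 := by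
      rw [← hκ2sq, hs]
    rw [h1, ← Module.End.mul_apply, hNt, LinearMap.zero_apply]
  -- key identity: N p.1 = (w+1) • (P2 p).1
  have hkey : ∀ p : X2 × X3, N p.1 = ((w + 1 : ℕ) : k) • (P2 p).1 := by
    intro p
    have : N p.1 = N (p - P2 p).1 + N (P2 p).1 := by
      rw [← map_add, Prod.fst_sub]
      congr 1
      abel
    rw [this, hNperp, zero_add, hNP2]
  have hw1 : ((w : k) + 1) ≠ 0 := by
    have := Nat.cast_add_one_ne_zero (R := k) w
    simpa using this
  have hcast : ((w + 1 : ℕ) : k) = (w : k) + 1 := by push_cast; ring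
  -- claim 2
  have claim2 : ∀ p : X2 × X3,
      ∑ i ∈ Finset.range (w + 1), (κ1 ^ i) (R21 p) = B p := by
    intro p
    have hR : R21 p = ((0 : X1), p.1) := by simp [R21]
    rw [hR]
    simp only [hκ1pow]
    rw [Prod.ext_iff]
    constructor
    · simp [B, Prod.fst_sum]
    · simp [B, hN, Prod.snd_sum, LinearMap.sum_apply]
  refine ⟨?_, claim2, ?_, ?_⟩
  · -- claim 1
    intro p
    have h1 : P1 (R21 p) = R21 (P2 p) := by
      have := congrFun (congrArg DFunLike.coe hPR) p
      simpa using this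
    rw [h1, claim2]
    have hB : B p = ((0 : X1), N p.1) := by simp [B, hN]
    rw [hB, hkey, hcast]
    have hR : R21 (P2 p) = ((0 : X1), (P2 p).1) := by simp [R21]
    rw [hR, Prod.smul_mk, smul_zero, inv_smul_smul₀ hw1]
  · -- claim 3
    intro p
    have : B (p - P2 p) = ((0 : X1), N (p - P2 p).1) := by simp [B, hN]
    rw [this, hNperp]
    rfl
  · -- claim 4
    intro p
    have hB : B p = ((0 : X1), N p.1) := by simp [B, hN]
    have hR : R21 (P2 p) = ((0 : X1), (P2 p).1) := by simp [R21]
    rw [hB, hR, hkey, hcast, Prod.smul_mk, smul_zero]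
end
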